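/- arXiv:0907.1993 — 2 statements merged into one kernel-verified Lean document; each statement's English description precedes it below -/
import Mathlib

section
/- If a module M is (n,m)-SG-projective, then M is (nk, m)-SG-projective for every integer k ≥ 1. In particular, every (1,m)-SG-projective module is (n,m)-SG-projective for every n ≥ 1. -/
/- Formalization preliminaries: exact sequences of modules, projective/flat/Gorenstein
projective dimensions, (n,m)-strongly Gorenstein projective modules. -/

open CategoryTheory

universe u

variable (R : Type u) [Ring R]

/-- `IsExactSeq d n` says that the finite complex
`0 → X (n+1) → X n → ⋯ → X 1 → X 0 → 0` (with maps `d i : X (i+1) ⟶ X i` for `i ≤ n`)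
is exact everywhere: `d n` is injective, `d 0` is surjective, and it is exact at the
interior terms. -/
def IsExactSeq {X : ℕ → ModuleCat.{u} R} (d : ∀ i, X (i + 1) ⟶ X i) (n : ℕ) : Prop :=
  Function.Injective (d n) ∧ Function.Surjective (d 0) ∧
    ∀ i < n, Function.Exact (d (i + 1)) (d i)

/-- The finite exact sequence `0 → X (n+1) → ⋯ → X 0 → 0` remains exact after applying
`Hom(-, Q)` for every projective module `Q`. -/
def IsHomProjExactSeq {X : ℕ → ModuleCat.{u} R} (d : ∀ i, X (i + 1) ⟶ X i) (n : ℕ) : Prop :=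
  ∀ Q : ModuleCat.{u} R, Projective Q →
    Function.Injective (fun g : X 0 ⟶ Q => d 0 ≫ g) ∧
    Function.Surjective (fun g : X n ⟶ Q => d n ≫ g) ∧
    ∀ i < n, Function.Exact (fun g : X i ⟶ Q => d i ≫ g)
      (fun g : X (i + 1) ⟶ Q => d (i + 1) ≫ g)

/-- `M` has projective dimension at most `m`: there is an exact sequence
`0 → P_m → ⋯ → P_0 → M → 0` with all `P_i` projective. -/
def HasPdLE (M : ModuleCat.{u} R) (m : ℕ) : Prop :=
  ∃ (X : ℕ → ModuleCat.{u} R) (d : ∀ i, X (i + 1) ⟶ X i),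
    Nonempty (X 0 ≅ M) ∧ (∀ i, 1 ≤ i → i ≤ m + 1 → Projective (X i)) ∧ IsExactSeq R d m

/-- `M` is a flat module, expressed via the equational criterion of flatness
(valid over any associative ring): whenever `∑ aᵢ • xᵢ = 0` with `aᵢ ∈ R`, `xᵢ ∈ M`,
there are `yⱼ ∈ M` and `bᵢⱼ ∈ R` with `xᵢ = ∑ⱼ bᵢⱼ • yⱼ` and `∑ᵢ aᵢ * bᵢⱼ = 0`. -/
def IsFlatModule (M : ModuleCat.{u} R) : Prop :=
  ∀ (k : ℕ) (a : Fin k → R) (x : Fin k → M), (∑ i, a i • x i) = 0 →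
    ∃ (l : ℕ) (b : Fin k → Fin l → R) (y : Fin l → M),
      (∀ i, x i = ∑ j, b i j • y j) ∧ ∀ j, (∑ i, a i * b i j) = 0

/-- `M` has flat dimension at most `m`: there is an exact sequence
`0 → F_m → ⋯ → F_0 → M → 0` with all `F_i` flat. -/
def HasFdLE (M : ModuleCat.{u} R) (m : ℕ) : Prop :=
  ∃ (X : ℕ → ModuleCat.{u} R) (d : ∀ i, X (i + 1) ⟶ X i),
    Nonempty (X 0 ≅ M) ∧ (∀ i, 1 ≤ i → i ≤ m + 1 → IsFlatModule R (X i)) ∧ IsExactSeq R d m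

/-- A complete projective resolution of `M`: an exact sequence of projective modules
`⋯ → P 1 → P 0 → P (-1) → ⋯` which stays exact after applying `Hom(-, Q)` for every
projective `Q`, together with an isomorphism `M ≅ Im (P 0 → P (-1))`. -/
structure CompleteProjRes (M : ModuleCat.{u} R) where
  P : ℤ → ModuleCat.{u} R
  d : ∀ i : ℤ, P (i + 1) ⟶ P i
  projective : ∀ i, Projective (P i)
  exact : ∀ i, Function.Exact (d (i + 1)) (d i)
  homExact : ∀ Q : ModuleCat.{u} R, Projective Q → ∀ i,
    Function.Exact (fun g : P i ⟶ Q => d i ≫ g) (fun g : P (i + 1) ⟶ Q => d (i + 1) ≫ g)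
  iso : Nonempty (M ≅ ModuleCat.of R (LinearMap.range (d (-1)).hom))

/-- `M` is Gorenstein projective if it admits a complete projective resolution. -/
def IsGProjective (M : ModuleCat.{u} R) : Prop := Nonempty (CompleteProjRes R M)

/-- `M` has Gorenstein projective dimension at most `k`: there is an exact sequence
`0 → G_k → ⋯ → G_0 → M → 0` with all `G_i` Gorenstein projective. -/
def HasGpdLE (M : ModuleCat.{u} R) (k : ℕ) : Prop :=
  ∃ (X : ℕ → ModuleCat.{u} R) (d : ∀ i, X (i + 1) ⟶ X i),
    Nonempty (X 0 ≅ M) ∧ (∀ i, 1 ≤ i → i ≤ k + 1 → IsGProjective R (X i)) ∧ IsExactSeq R d k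

/-- `Gpd M = k`. -/
def HasGpdEq (M : ModuleCat.{u} R) (k : ℕ) : Prop :=
  HasGpdLE R M k ∧ ∀ j < k, ¬ HasGpdLE R M j

/-- `M` is `n`-strongly Gorenstein projective: there is an exact sequence
`0 → M → P_n → ⋯ → P_1 → M → 0` with all `P_i` projective which remains exact under
`Hom(-, Q)` for every projective `Q`. -/
def IsNSGProjective (n : ℕ) (M : ModuleCat.{u} R) : Prop :=
  ∃ (X : ℕ → ModuleCat.{u} R) (d : ∀ i, X (i + 1) ⟶ X i),
    Nonempty (X 0 ≅ M) ∧ Nonempty (X (n + 1) ≅ M) ∧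
    (∀ i, 1 ≤ i → i ≤ n → Projective (X i)) ∧
    IsExactSeq R d n ∧ IsHomProjExactSeq R d n

/-- The `Ext` group `Ext^i(M, N)` (as a `ℤ`-module). -/
noncomputable def extGroup (i : ℕ) (M N : ModuleCat.{u} R) : ModuleCat ℤ :=
  ((Ext ℤ (ModuleCat.{u} R) i).obj (Opposite.op M)).obj N

/-- `M` is `(n, m)`-strongly Gorenstein projective: there is an exact sequence
`0 → M → Q_n → ⋯ → Q_1 → M → 0` with `pd (Q_i) ≤ m` for all `i`, and
`Ext^i(M, Q) = 0` for every `i > m` and every projective `Q`. -/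
def IsSGProjective (n m : ℕ) (M : ModuleCat.{u} R) : Prop :=
  (∃ (X : ℕ → ModuleCat.{u} R) (d : ∀ i, X (i + 1) ⟶ X i),
    Nonempty (X 0 ≅ M) ∧ Nonempty (X (n + 1) ≅ M) ∧
    (∀ i, 1 ≤ i → i ≤ n → HasPdLE R (X i) m) ∧ IsExactSeq R d n) ∧
  ∀ i, m < i → ∀ Q : ModuleCat.{u} R, Projective Q → Subsingleton (extGroup R i M Q)

/-- A projective resolution `⋯ → P 1 → P 0 → M → 0` of `M`. -/
structure ProjRes (M : ModuleCat.{u} R) where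
  P : ℕ → ModuleCat.{u} R
  d : ∀ i : ℕ, P (i + 1) ⟶ P i
  π : P 0 ⟶ M
  projective : ∀ i, Projective (P i)
  surj : Function.Surjective π
  exact₀ : Function.Exact (d 0) π
  exact : ∀ i, Function.Exact (d (i + 1)) (d i)

/-- `K` is an `i`-th syzygy of `M` (for `i ≥ 1`): `K ≅ Im (P i → P (i-1))` in some
projective resolution of `M`. -/
def IsSyzygy (M : ModuleCat.{u} R) (i : ℕ) (K : ModuleCat.{u} R) : Prop :=
  ∃ res : ProjRes R M, Nonempty (K ≅ ModuleCat.of R (LinearMap.range (res.d (i - 1)).hom))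

/-! Splicing two exact sequences `0 → M → ⋯ → M → 0` along the common end `M` gives another one,
whose length is the sum of the two lengths and whose middle terms are those of both. Splicing
the given sequence of length `n` with itself `k` times therefore gives one of length `n * k`
whose middle terms still have projective dimension at most `m`; the `Ext` condition does not
involve `n`. -/

variable {R}

section Splice

variable {X Y : ℕ → ModuleCat.{u} R}

lemma injective_eqToHom_comp_comp_eqToHom_iff {A A' B B' : ModuleCat.{u} R} (hA : A' = A)
    (hB : B = B') (f : A ⟶ B) :
    Function.Injective (eqToHom hA ≫ f ≫ eqToHom hB) ↔ Function.Injective f := by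
  subst hA hB; simp

lemma surjective_eqToHom_comp_comp_eqToHom_iff {A A' B B' : ModuleCat.{u} R} (hA : A' = A)
    (hB : B = B') (f : A ⟶ B) :
    Function.Surjective (eqToHom hA ≫ f ≫ eqToHom hB) ↔ Function.Surjective f := by
  subst hA hB; simp

lemma exact_eqToHom_comp_comp_eqToHom_iff {A A' B B' B'' C C' : ModuleCat.{u} R}
    (f : A ⟶ B) (g : B' ⟶ C) (hA : A' = A) (hB : B = B'') (hB' : B'' = B') (hC : C = C') :
    Function.Exact (eqToHom hA ≫ f ≫ eqToHom hB) (eqToHom hB' ≫ g ≫ eqToHom hC) ↔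
      Function.Exact (f ≫ eqToHom (hB.trans hB')) g := by
  subst hA hB hB' hC; simp

lemma exact_comp_eqToHom_iff {d : ∀ i, Y (i + 1) ⟶ Y i} {s t : ℕ} (hst : s = t + 1)
    (h : Y s = Y (t + 1)) :
    Function.Exact (d s ≫ eqToHom h) (d t) ↔ Function.Exact (d (t + 1)) (d t) := by
  subst hst; simp

def spliceObj (X Y : ℕ → ModuleCat.{u} R) (a i : ℕ) : ModuleCat.{u} R :=
  if i ≤ a then X i else Y (i - a)

variable {a i : ℕ}

lemma spliceObj_of_le (h : i ≤ a) : spliceObj X Y a i = X i := if_pos h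

lemma spliceObj_of_lt (h : a < i) : spliceObj X Y a i = Y (i - a) := if_neg (by omega)

lemma spliceObj_succ_self : spliceObj X Y a (a + 1) = Y 1 :=
  (spliceObj_of_lt a.lt_succ_self).trans (congrArg Y (by omega))

/-- Splicing `⋯ → X 0` below `Y (b+1) → ⋯` along `e : Y 0 ⟶ X (a+1)`: the terms `X (a+1)` and
`Y 0` are dropped and joined by the map `dY 0 ≫ e ≫ dX a : Y 1 ⟶ X a`. -/
def spliceHom (dX : ∀ i, X (i + 1) ⟶ X i) (dY : ∀ i, Y (i + 1) ⟶ Y i) (e : Y 0 ⟶ X (a + 1))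
    (i : ℕ) : spliceObj X Y a (i + 1) ⟶ spliceObj X Y a i :=
  if h : i < a then
    eqToHom (spliceObj_of_le h) ≫ dX i ≫ eqToHom (spliceObj_of_le h.le).symm
  else if h' : i = a then
    eqToHom (h' ▸ spliceObj_succ_self) ≫ (dY 0 ≫ e ≫ dX a) ≫
      eqToHom (h' ▸ (spliceObj_of_le le_rfl).symm)
  else
    eqToHom ((spliceObj_of_lt (by omega)).trans (congrArg Y (by omega))) ≫ dY (i - a) ≫
      eqToHom (spliceObj_of_lt (by omega)).symm

variable {dX : ∀ i, X (i + 1) ⟶ X i} {dY : ∀ i, Y (i + 1) ⟶ Y i} {f : Y 0 ⟶ X (a + 1)}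

lemma spliceHom_of_lt (h : i < a) :
    spliceHom dX dY f i =
      eqToHom (spliceObj_of_le h) ≫ dX i ≫ eqToHom (spliceObj_of_le h.le).symm :=
  dif_pos h

lemma spliceHom_self :
    spliceHom dX dY f a =
      eqToHom spliceObj_succ_self ≫ (dY 0 ≫ f ≫ dX a) ≫ eqToHom (spliceObj_of_le le_rfl).symm := by
  rw [spliceHom, dif_neg (lt_irrefl a), dif_pos rfl]

lemma spliceHom_of_gt (h : a < i) :
    spliceHom dX dY f i =
      eqToHom ((spliceObj_of_lt (by omega)).trans (congrArg Y (by omega))) ≫ dY (i - a) ≫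
        eqToHom (spliceObj_of_lt h).symm := by
  rw [spliceHom, dif_neg (by omega), dif_neg (by omega)]

theorem IsExactSeq.splice {b : ℕ} (hX : IsExactSeq R dX a) (hY : IsExactSeq R dY b)
    (e : Y 0 ≅ X (a + 1)) : IsExactSeq R (spliceHom dX dY e.hom) (a + b) := by
  obtain ⟨hXinj, hXsurj, hXexact⟩ := hX
  obtain ⟨hYinj, hYsurj, hYexact⟩ := hY
  have he := ConcreteCategory.bijective_of_isIso e.hom
  refine ⟨?_, ?_, fun i hi => ?_⟩
  · rcases b.eq_zero_or_pos with rfl | hb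
    · change Function.Injective (spliceHom dX dY e.hom a)
      rw [spliceHom_self, injective_eqToHom_comp_comp_eqToHom_iff]
      exact hXinj.comp (he.1.comp hYinj)
    · rw [spliceHom_of_gt (by omega), injective_eqToHom_comp_comp_eqToHom_iff,
        Nat.add_sub_cancel_left]
      exact hYinj
  · rcases a.eq_zero_or_pos with rfl | ha
    · rw [spliceHom_self, surjective_eqToHom_comp_comp_eqToHom_iff]
      exact hXsurj.comp (he.2.comp hYsurj)
    · rw [spliceHom_of_lt ha, surjective_eqToHom_comp_comp_eqToHom_iff]
      exact hXsurj
  · rcases lt_trichotomy (i + 1) a with h | rfl | h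
    · rw [spliceHom_of_lt h, spliceHom_of_lt (by omega), exact_eqToHom_comp_comp_eqToHom_iff]
      simpa using hXexact i (by omega)
    · rw [spliceHom_self, spliceHom_of_lt (by omega), exact_eqToHom_comp_comp_eqToHom_iff,
        eqToHom_refl, Category.comp_id]
      exact (Function.Surjective.comp_exact_iff_exact (f := (dX (i + 1)).hom)
        (p := (dY 0 ≫ e.hom).hom) (he.2.comp hYsurj)).2 (hXexact i (by omega))
    · rcases (Nat.lt_succ_iff.mp h).eq_or_lt with rfl | h
      · rw [spliceHom_of_gt (by omega), spliceHom_self, exact_eqToHom_comp_comp_eqToHom_iff]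
        refine (Function.Injective.comp_exact_iff_exact (i := (e.hom ≫ dX a).hom)
          (hXinj.comp he.1)).2 ?_
        exact (exact_comp_eqToHom_iff (by omega) _).2 (hYexact 0 (by omega))
      · rw [spliceHom_of_gt (by omega), spliceHom_of_gt h, exact_eqToHom_comp_comp_eqToHom_iff]
        exact (exact_comp_eqToHom_iff (by omega) _).2 (hYexact (i - a) (by omega))

end Splice

/-- An `n`-fold Yoneda self-extension `0 → M → X n → ⋯ → X 1 → M → 0` of `M` whose middle terms
satisfy `P`. -/
def HasSelfExtension (P : ModuleCat.{u} R → Prop) (n : ℕ) (M : ModuleCat.{u} R) : Prop :=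
  ∃ (X : ℕ → ModuleCat.{u} R) (d : ∀ i, X (i + 1) ⟶ X i),
    Nonempty (X 0 ≅ M) ∧ Nonempty (X (n + 1) ≅ M) ∧
    (∀ i, 1 ≤ i → i ≤ n → P (X i)) ∧ IsExactSeq R d n

namespace HasSelfExtension

variable {P : ModuleCat.{u} R → Prop} {M : ModuleCat.{u} R}

theorem zero : HasSelfExtension P 0 M :=
  ⟨fun _ => M, fun _ => 𝟙 M, ⟨Iso.refl M⟩, ⟨Iso.refl M⟩, fun _ _ _ => by omega,
    Function.injective_id, Function.surjective_id, fun _ h => absurd h (Nat.not_lt_zero _)⟩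

theorem add {a b : ℕ} (h₁ : HasSelfExtension P a M) (h₂ : HasSelfExtension P b M) :
    HasSelfExtension P (a + b) M := by
  obtain ⟨X, dX, ⟨eX₀⟩, ⟨eX⟩, hPX, hX⟩ := h₁
  obtain ⟨Y, dY, ⟨eY₀⟩, ⟨eY⟩, hPY, hY⟩ := h₂
  refine ⟨spliceObj X Y a, spliceHom dX dY (eY₀ ≪≫ eX.symm).hom,
    ⟨eqToIso (spliceObj_of_le a.zero_le) ≪≫ eX₀⟩,
    ⟨eqToIso ((spliceObj_of_lt (by omega)).trans (congrArg Y (by omega))) ≪≫ eY⟩,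
    fun i hi₁ hi₂ => ?_, hX.splice hY _⟩
  by_cases hi : i ≤ a
  · rw [spliceObj_of_le hi]
    exact hPX i hi₁ hi
  · rw [spliceObj_of_lt (by omega)]
    exact hPY (i - a) (by omega) (by omega)

theorem mul {n : ℕ} (h : HasSelfExtension P n M) (k : ℕ) : HasSelfExtension P (n * k) M := by
  induction k with
  | zero => exact zero
  | succ k ih => exact ih.add h

end HasSelfExtension

theorem IsSGProjective.mul {n m : ℕ} {M : ModuleCat.{u} R} (hM : IsSGProjective R n m M)
    (k : ℕ) : IsSGProjective R (n * k) m M :=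
  ⟨HasSelfExtension.mul (P := fun Q => HasPdLE R Q m) hM.1 k, hM.2⟩

theorem sgProjective_mul_general {R : Type u} [Ring R] (n m : ℕ)
    (M : ModuleCat.{u} R) (hM : IsSGProjective R n m M) :
    (∀ k, 1 ≤ k → IsSGProjective R (n * k) m M) ∧
      (∀ N : ModuleCat.{u} R, IsSGProjective R 1 m N →
        ∀ n', 1 ≤ n' → IsSGProjective R n' m N) :=
  ⟨fun k _ => hM.mul k, fun N hN n' _ => by simpa using hN.mul n'⟩

/-- An `(n,m)`-SG-projective module is `(nk,m)`-SG-projective for every `k ≥ 1`;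
in particular every `(1,m)`-SG-projective module is `(n,m)`-SG-projective for every `n ≥ 1`. -/
theorem sgProjective_mul {R : Type u} [Ring R] (n m : ℕ) (hn : 1 ≤ n)
    (M : ModuleCat.{u} R) (hM : IsSGProjective R n m M) :
    (∀ k, 1 ≤ k → IsSGProjective R (n * k) m M) ∧
      (∀ N : ModuleCat.{u} R, IsSGProjective R 1 m N →
        ∀ n', 1 ≤ n' → IsSGProjective R n' m N) :=
  sgProjective_mul_general n m M hM
end

section
/- If M is an (n,m)-SG-projective module and K_1 is a first syzygy of M (i.e., there is a short exact sequence 0 → K_1 → P_0 → M → 0 with P_0 projective), then K_1 is (n, m−1)-SG-projective (where m ≥ 1). -/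
/- Formalization preliminaries: exact sequences of modules, projective/flat/Gorenstein
projective dimensions, (n,m)-strongly Gorenstein projective modules. -/

open CategoryTheory

universe u

variable (R : Type u) [Ring R]

/-!
Split `0 → M → X_n → ⋯ → X_1 → M → 0` into short exact sequences
`0 → B_{k+1} → X_{k+1} → B_k → 0` with `B_0 ≅ B_n ≅ M`. Cover every `B_k` by a projective,
using `P → M` at both ends, and apply the horseshoe lemma: the kernels fit into short exact
sequences `0 → W_{k+1} → V_k → W_k → 0` with `W_0 ≅ W_n ≅ K`, where `V_k` is the kernel of a
surjection from a projective onto `X_{k+1}`, hence has projective dimension `≤ m - 1` (read off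
from Mathlib's `Ext`-based projective dimension, which agrees with `HasPdLE`).
Splicing these gives the sequence for `K`. The `Ext` condition is dimension shifting:
prepending `P` to a projective resolution of `K` resolves `M`, so
`Ext^{i+1}(K, Q) ≅ Ext^{i+2}(M, Q)`.
-/

section
variable {R}

structure IsShortExact {A B C : ModuleCat.{u} R} (f : A ⟶ B) (g : B ⟶ C) : Prop where
  injective : Function.Injective f
  exact : Function.Exact f g
  surjective : Function.Surjective g

theorem Function.Exact.isShortExact_range {X Y Z : ModuleCat.{u} R} {f : X ⟶ Y} {g : Y ⟶ Z}
    (h : Function.Exact f g) :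
    IsShortExact (ModuleCat.ofHom (LinearMap.range f.hom).subtype)
      (ModuleCat.ofHom g.hom.rangeRestrict) where
  injective := Subtype.val_injective
  exact y := by
    simp only [ModuleCat.hom_ofHom, Submodule.coe_subtype, Subtype.range_coe_subtype]
    exact Subtype.ext_iff.trans (h y)
  surjective := g.hom.surjective_rangeRestrict

theorem IsShortExact.nonempty_ker_iso {K P M B : ModuleCat.{u} R} {f : K ⟶ P} {g : P ⟶ M}
    (h : IsShortExact f g) (e : M ≅ B) :
    Nonempty (ModuleCat.of R (LinearMap.ker (g ≫ e.hom).hom) ≅ K) := by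
  have hker : LinearMap.ker (g ≫ e.hom).hom = LinearMap.range f.hom := by
    rw [ModuleCat.hom_comp, ← h.exact.linearMap_ker_eq]
    exact LinearEquiv.ker_comp e.toLinearEquiv g.hom
  exact ⟨((LinearEquiv.ofEq _ _ hker).trans
    (LinearEquiv.ofInjective f.hom h.injective).symm).toModuleIso⟩

theorem IsShortExact.exists_horseshoe {A B C TA TC : ModuleCat.{u} R} {ι : A ⟶ B} {π : B ⟶ C}
    (h : IsShortExact ι π) [Projective TA] [Projective TC] {pA : TA ⟶ A} {pC : TC ⟶ C}
    (hpA : Function.Surjective pA) (hpC : Function.Surjective pC) :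
    ∃ (S : ModuleCat.{u} R) (q : S ⟶ B)
      (α : ModuleCat.of R (LinearMap.ker pA.hom) ⟶ ModuleCat.of R (LinearMap.ker q.hom))
      (β : ModuleCat.of R (LinearMap.ker q.hom) ⟶ ModuleCat.of R (LinearMap.ker pC.hom)),
      Projective S ∧ Function.Surjective q ∧ IsShortExact α β := by
  have : Module.Projective R TA := (IsProjective.iff_projective TA).2 ‹_›
  have : Module.Projective R TC := (IsProjective.iff_projective TC).2 ‹_›
  obtain ⟨σ, hσ⟩ := Module.projective_lifting_property π.hom pC.hom h.surjective
  have hπσ (c : TC) : π (σ c) = pC c := LinearMap.congr_fun hσ c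
  -- `q` is `ι ∘ pA` on `TA` and a lift of `pC` along `π` on `TC`.
  let q : TA × TC →ₗ[R] B :=
    ι.hom ∘ₗ pA.hom ∘ₗ LinearMap.fst R TA TC + σ ∘ₗ LinearMap.snd R TA TC
  have hq (x : TA × TC) : q x = ι (pA x.1) + σ x.2 := rfl
  have hα : ∀ a ∈ LinearMap.ker pA.hom, LinearMap.inl R TA TC a ∈ LinearMap.ker q :=
    fun a ha => by simp [hq, LinearMap.mem_ker.1 ha]
  have hβ : ∀ x ∈ LinearMap.ker q, LinearMap.snd R TA TC x ∈ LinearMap.ker pC.hom := by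
    intro x hx
    have := congrArg π ((hq x).symm.trans hx)
    rwa [map_add, h.exact.apply_apply_eq_zero, zero_add, hπσ, map_zero] at this
  refine ⟨ModuleCat.of R (TA × TC), ModuleCat.ofHom q,
    ModuleCat.ofHom ((LinearMap.inl R TA TC).restrict hα),
    ModuleCat.ofHom ((LinearMap.snd R TA TC).restrict hβ),
    (IsProjective.iff_projective _).1 inferInstance, ?_, ?_, ?_, ?_⟩
  · intro b
    obtain ⟨c, hc⟩ := hpC (π b)
    obtain ⟨a, ha⟩ := (h.exact (b - σ c)).1 (by rw [map_sub, hπσ, hc, sub_self])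
    obtain ⟨t, rfl⟩ := hpA a
    exact ⟨(t, c), by simp [hq, ha]⟩
  · exact fun a b hab => Subtype.ext (congrArg Prod.fst (congrArg Subtype.val hab))
  · intro y
    constructor
    · obtain ⟨x, hx⟩ := y
      intro h2
      have h2 : x.2 = 0 := congrArg Subtype.val h2
      refine ⟨⟨x.1, ?_⟩, Subtype.ext (Prod.ext rfl h2.symm)⟩
      apply h.injective
      simpa [hq, h2] using hx
    · rintro ⟨a, rfl⟩
      rfl
  · rintro ⟨c, hc⟩
    obtain ⟨a, ha⟩ := (h.exact (σ c)).1 ((hπσ c).trans hc)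
    obtain ⟨t, rfl⟩ := hpA a
    exact ⟨⟨(-t, c), by simp [hq, ha]⟩, rfl⟩

theorem hasPdLE_zero_iff {B : ModuleCat.{u} R} : HasPdLE R B 0 ↔ Projective B := by
  constructor
  · rintro ⟨X, d, ⟨e⟩, hX, hinj, hsurj, -⟩
    exact Projective.of_iso ((LinearEquiv.ofBijective (d 0).hom ⟨hinj, hsurj⟩).toModuleIso ≪≫ e)
      (hX 1 le_rfl le_rfl)
  · intro hB
    exact ⟨fun _ => B, fun _ => 𝟙 B, ⟨Iso.refl B⟩, fun _ _ _ => hB, Function.injective_id,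
      Function.surjective_id, fun _ h => absurd h (Nat.not_lt_zero _)⟩

theorem HasPdLE.exists_ker {B : ModuleCat.{u} R} {k : ℕ} (h : HasPdLE R B (k + 1)) :
    ∃ (S : ModuleCat.{u} R) (q : S ⟶ B), Projective S ∧ Function.Surjective q ∧
      HasPdLE R (ModuleCat.of R (LinearMap.ker q.hom)) k := by
  obtain ⟨X, d, ⟨e⟩, hX, hinj, hsurj, hex⟩ := h
  let q := d 0 ≫ e.hom
  have hq : ∀ x, q x = 0 ↔ d 0 x = 0 := fun x => map_eq_zero_iff _ e.toLinearEquiv.injective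
  have hd1 : ∀ y, d 1 y ∈ LinearMap.ker q.hom :=
    fun y => (hq _).2 ((hex 0 (by omega)).apply_apply_eq_zero y)
  let Y : ℕ → ModuleCat.{u} R
    | 0 => ModuleCat.of R (LinearMap.ker q.hom)
    | i + 1 => X (i + 2)
  let δ : ∀ i, Y (i + 1) ⟶ Y i
    | 0 => ModuleCat.ofHom ((d 1).hom.codRestrict _ hd1)
    | i + 1 => d (i + 2)
  refine ⟨X 1, q, hX 1 le_rfl (by omega), e.toLinearEquiv.surjective.comp hsurj,
    Y, δ, ⟨Iso.refl _⟩, ?_, ?_, ?_, ?_⟩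
  · rintro (_ | i) h1 h2
    · omega
    · exact hX (i + 2) (by omega) (by omega)
  · cases k with
    | zero => exact fun x y hxy => hinj (congrArg Subtype.val hxy)
    | succ k => exact hinj
  · rintro ⟨x, hx⟩
    obtain ⟨y, rfl⟩ := (hex 0 (by omega) x).1 ((hq x).1 hx)
    exact ⟨y, rfl⟩
  · rintro (_ | i) hi
    · intro y
      exact Subtype.ext_iff.trans (hex 1 (by omega) y)
    · exact hex (i + 2) (by omega)

theorem HasPdLE.succ_of_ker {S B : ModuleCat.{u} R} {k : ℕ} (hS : Projective S) {q : S ⟶ B}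
    (hq : Function.Surjective q) (h : HasPdLE R (ModuleCat.of R (LinearMap.ker q.hom)) k) :
    HasPdLE R B (k + 1) := by
  obtain ⟨X, d, ⟨e⟩, hX, hinj, hsurj, hex⟩ := h
  let Y : ℕ → ModuleCat.{u} R
    | 0 => B
    | 1 => S
    | i + 2 => X (i + 1)
  let δ : ∀ i, Y (i + 1) ⟶ Y i
    | 0 => q
    | 1 => d 0 ≫ e.hom ≫ ModuleCat.ofHom (LinearMap.ker q.hom).subtype
    | i + 2 => d (i + 1)
  have hδ1 : Function.Exact (δ 1) (δ 0) := by
    intro y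
    constructor
    · intro hy
      obtain ⟨x, hx⟩ := hsurj (e.inv ⟨y, hy⟩)
      exact ⟨x, by simp [δ, hx]⟩
    · rintro ⟨x, rfl⟩
      exact (e.hom (d 0 x)).2
  refine ⟨Y, δ, ⟨Iso.refl _⟩, ?_, ?_, hq, ?_⟩
  · rintro (_ | _ | i) h1 h2
    · omega
    · exact hS
    · exact hX (i + 1) (by omega) (by omega)
  · cases k with
    | zero =>
      exact Subtype.val_injective.comp (e.toLinearEquiv.injective.comp hinj)
    | succ k => exact hinj
  · rintro (_ | _ | i) hi
    · exact hδ1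
    · exact (hex 0 (by omega)).comp_injective _
        (Subtype.val_injective.comp e.toLinearEquiv.injective) (by simp)
    · exact hex (i + 1) (by omega)

theorem hasPdLE_iff_hasProjectiveDimensionLE {B : ModuleCat.{u} R} {k : ℕ} :
    HasPdLE R B k ↔ HasProjectiveDimensionLE B k := by
  induction k generalizing B with
  | zero => rw [hasPdLE_zero_iff, projective_iff_hasProjectiveDimensionLE_zero]
  | succ k ih =>
    constructor
    · intro h
      obtain ⟨S, q, hS, hq, hK⟩ := h.exists_ker
      exact ((LinearMap.shortExact_shortComplexKer hq).hasProjectiveDimensionLT_X₃_iff k hS).2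
        (ih.1 hK)
    · intro h
      have hq := (ModuleCat.epi_iff_surjective (Projective.π B)).1 inferInstance
      exact HasPdLE.succ_of_ker inferInstance hq (ih.2
        (((LinearMap.shortExact_shortComplexKer hq).hasProjectiveDimensionLT_X₃_iff k
          (Projective.projective_over B)).1 h))

-- For `k = 0` the truncated `k - 1` is `0`: the kernel is then projective.
theorem HasPdLE.ker_of_surjective {S B : ModuleCat.{u} R} {k : ℕ} (hB : HasPdLE R B k)
    [Projective S] {q : S ⟶ B} (hq : Function.Surjective q) :
    HasPdLE R (ModuleCat.of R (LinearMap.ker q.hom)) (k - 1) := by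
  rw [hasPdLE_iff_hasProjectiveDimensionLE] at hB ⊢
  have : HasProjectiveDimensionLT S (k - 1 + 1) :=
    hasProjectiveDimensionLT_of_ge S 1 _ (by omega)
  have : HasProjectiveDimensionLT B (k - 1 + 2) :=
    hasProjectiveDimensionLT_of_ge B (k + 1) _ (by omega)
  exact (LinearMap.shortExact_shortComplexKer hq).hasProjectiveDimensionLT_X₁ (k - 1 + 1)
    inferInstance inferInstance

/-- Together with `splicedMap`: the sequence `⋯ → V 1 → V 0 → W 0` spliced from the
sequences `W (k + 1) → V k → W k`. -/
def splicedObj (W V : ℕ → ModuleCat.{u} R) : ℕ → ModuleCat.{u} R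
  | 0 => W 0
  | k + 1 => V k

def splicedMap {W V : ℕ → ModuleCat.{u} R} (α : ∀ k, W (k + 1) ⟶ V k) (β : ∀ k, V k ⟶ W k) :
    ∀ i, splicedObj W V (i + 1) ⟶ splicedObj W V i
  | 0 => β 0
  | k + 1 => β (k + 1) ≫ α k

theorem isExactSeq_splicedMap {W V : ℕ → ModuleCat.{u} R} (α : ∀ k, W (k + 1) ⟶ V k)
    (β : ∀ k, V k ⟶ W k) {n : ℕ} (hses : ∀ k < n, IsShortExact (α k) (β k))
    (htop : Function.Bijective (β n)) :
    IsExactSeq R (splicedMap α β) n := by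
  have hβ (k : ℕ) (hk : k ≤ n) : Function.Surjective (β k) := by
    rcases hk.lt_or_eq with hk | rfl
    exacts [(hses k hk).surjective, htop.2]
  refine ⟨?_, hβ 0 (Nat.zero_le n), ?_⟩
  · cases n with
    | zero => exact htop.1
    | succ k => exact (hses k (by omega)).injective.comp htop.1
  · rintro (_ | i) hi
    · exact (Function.Surjective.comp_exact_iff_exact (f := (α 0).hom) (g := (β 0).hom)
        (hβ 1 hi)).2 (hses 0 (by omega)).exact
    · exact ((Function.Surjective.comp_exact_iff_exact (f := (α (i + 1)).hom)
        (hβ (i + 2) hi)).2 (hses (i + 1) hi).exact).comp_injective _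
          (hses i (by omega)).injective (map_zero (α i).hom)

def HasSGSequence (n m : ℕ) (M : ModuleCat.{u} R) : Prop :=
  ∃ (X : ℕ → ModuleCat.{u} R) (d : ∀ i, X (i + 1) ⟶ X i),
    Nonempty (X 0 ≅ M) ∧ Nonempty (X (n + 1) ≅ M) ∧
    (∀ i, 1 ≤ i → i ≤ n → HasPdLE R (X i) m) ∧ IsExactSeq R d n

theorem HasSGSequence.syzygy {n m : ℕ} {K P M : ModuleCat.{u} R} [Projective P] {f : K ⟶ P}
    {g : P ⟶ M} (hM : HasSGSequence n m M) (hfg : IsShortExact f g) :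
    HasSGSequence n (m - 1) K := by
  obtain ⟨X, d, ⟨e₀⟩, ⟨eₙ⟩, hpd, hinj, hsurj, hex⟩ := hM
  let B (k : ℕ) : ModuleCat.{u} R := ModuleCat.of R (LinearMap.range (d k).hom)
  have hB : ∀ k, k = 0 ∨ k = n → Nonempty (M ≅ B k) := by
    rintro k (rfl | rfl)
    · exact ⟨e₀.symm ≪≫ (LinearEquiv.ofTop _ (LinearMap.range_eq_top.2 hsurj)).symm.toModuleIso⟩
    · exact ⟨eₙ.symm ≪≫ (LinearEquiv.ofInjective _ hinj).toModuleIso⟩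
  have hpres (k : ℕ) : ∃ (T : ModuleCat.{u} R) (p : T ⟶ B k), Projective T ∧
      Function.Surjective p ∧
      (k = 0 ∨ k = n → Nonempty (ModuleCat.of R (LinearMap.ker p.hom) ≅ K)) := by
    by_cases hk : k = 0 ∨ k = n
    · obtain ⟨e⟩ := hB k hk
      exact ⟨P, g ≫ e.hom, ‹_›, e.toLinearEquiv.surjective.comp hfg.surjective,
        fun _ => hfg.nonempty_ker_iso e⟩
    · exact ⟨_, Projective.π (B k), inferInstance,
        (ModuleCat.epi_iff_surjective _).1 inferInstance, fun h => absurd h hk⟩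
  choose T p hT hp hK using hpres
  let W (k : ℕ) : ModuleCat.{u} R := ModuleCat.of R (LinearMap.ker (p k).hom)
  have hstep (k : ℕ) : ∃ (V : ModuleCat.{u} R) (α : W (k + 1) ⟶ V) (β : V ⟶ W k),
      (k < n → IsShortExact α β ∧ HasPdLE R V (m - 1)) ∧ (k = n → Function.Bijective β) := by
    by_cases hk : k < n
    · have := hT k
      have := hT (k + 1)
      obtain ⟨S, q, α, β, hS, hq, hαβ⟩ :=
        (hex k hk).isShortExact_range.exists_horseshoe (hp (k + 1)) (hp k)
      exact ⟨_, α, β, fun _ => ⟨hαβ, (hpd (k + 1) (by omega) (by omega)).ker_of_surjective hq⟩,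
        fun h => absurd h hk.ne⟩
    -- the spliced sequence ends in `V n := W n ≅ K`
    · exact ⟨W k, 0, 𝟙 _, fun h => absurd h hk, fun _ => Function.bijective_id⟩
  choose V α β hses htop using hstep
  refine ⟨splicedObj W V, splicedMap α β, hK 0 (Or.inl rfl), ?_, ?_,
    isExactSeq_splicedMap α β (fun k hk => (hses k hk).1) (htop n rfl)⟩
  · obtain ⟨e⟩ := hK n (Or.inr rfl)
    exact ⟨(LinearEquiv.ofBijective (β n).hom (htop n rfl)).toModuleIso ≪≫ e⟩
  · rintro (_ | k) h1 h2
    · omega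
    · exact (hses k (by omega)).2

lemma HomologicalComplex.exactAt_iff_function_exact {S : Type*} [Ring S] {ι : Type*}
    {c : ComplexShape ι} (C : HomologicalComplex (ModuleCat S) c) {i j k : ι}
    (hi : c.prev j = i) (hk : c.next j = k) :
    C.ExactAt j ↔ Function.Exact (C.d i j) (C.d j k) := by
  rw [C.exactAt_iff' i j k hi hk, ShortComplex.ShortExact.moduleCat_exact_iff_function_exact]
  rfl

namespace CategoryTheory.ProjectiveResolution

noncomputable def ofExact {S : Type*} [Ring S] {Z : ModuleCat S} (C : ChainComplex (ModuleCat S) ℕ)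
    [∀ n, Projective (C.X n)] (ε : C.X 0 ⟶ Z) (hε : Function.Surjective ε)
    (h₀ : Function.Exact (C.d 1 0) ε)
    (h : ∀ n, Function.Exact (C.d (n + 2) (n + 1)) (C.d (n + 1) n)) :
    ProjectiveResolution Z where
  complex := C
  π := (ChainComplex.toSingle₀Equiv C Z).symm ⟨ε, by ext x; exact h₀.apply_apply_eq_zero x⟩
  quasiIso := ⟨fun n => by
    cases n with
    | zero =>
      rw [ChainComplex.quasiIsoAt₀_iff, ShortComplex.quasiIso_iff_of_zeros']
      · exact ⟨(ShortComplex.ShortExact.moduleCat_exact_iff_function_exact _).2 h₀,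
          (ModuleCat.epi_iff_surjective _).2 hε⟩
      · exact C.shape 0 0 (by simp)
      all_goals rfl
    | succ n =>
      rw [quasiIsoAt_iff_exactAt' _ _ (ChainComplex.exactAt_succ_single_obj _ _),
        C.exactAt_iff_function_exact (i := n + 2) (k := n) (by simp) (by simp)]
      exact h n⟩

variable {K P M : ModuleCat.{u} R} [Projective P] {f : K ⟶ P} {g : P ⟶ M}

/-- The projective resolution `⋯ → res₁ → res₀ → P` of `M`. -/
noncomputable def prepend (res : ProjectiveResolution K) (h : IsShortExact f g) :
    ProjectiveResolution M :=
  let ε := (ChainComplex.toSingle₀Equiv _ _ res.π).1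
  let C := res.complex.augment (ε ≫ f)
    (by rw [← Category.assoc, (ChainComplex.toSingle₀Equiv _ _ res.π).2, Limits.zero_comp])
  have : ∀ n, Projective (C.X n)
    | 0 => ‹_›
    | n + 1 => res.projective n
  have hε : Function.Exact (res.complex.d 1 0) ε :=
    (ShortComplex.ShortExact.moduleCat_exact_iff_function_exact _).1 res.exact₀
  ofExact C g h.surjective
    ((Function.Surjective.comp_exact_iff_exact (f := f.hom) (g := g.hom)
        ((ModuleCat.epi_iff_surjective _).1 (inferInstance : Epi (res.π.f 0)))).2 h.exact)
    (by
      rintro (_ | n)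
      · exact hε.comp_injective _ h.injective (map_zero f.hom)
      · exact (res.complex.exactAt_iff_function_exact (by simp) (by simp)).1
          (res.complex_exactAt_succ n))

lemma subsingleton_extGroup_succ_iff {X : ModuleCat.{u} R}
    (res : ProjectiveResolution X) (i : ℕ) (Q : ModuleCat.{u} R) :
    Subsingleton (extGroup R (i + 1) X Q) ↔
      Function.Exact ((res.complex.linearYonedaObj ℤ Q).d i (i + 1))
        ((res.complex.linearYonedaObj ℤ Q).d (i + 1) (i + 2)) := by
  rw [← ModuleCat.isZero_iff_subsingleton, extGroup, (res.isoExt (i + 1) Q).isZero_iff,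
    ← HomologicalComplex.exactAt_iff_isZero_homology,
    HomologicalComplex.exactAt_iff_function_exact _ (i := i) (k := i + 2) (by simp) (by simp)]

end CategoryTheory.ProjectiveResolution

theorem IsShortExact.subsingleton_extGroup {K P M : ModuleCat.{u} R} [Projective P]
    {f : K ⟶ P} {g : P ⟶ M} (h : IsShortExact f g) (i : ℕ) (Q : ModuleCat.{u} R)
    (hM : Subsingleton (extGroup R (i + 2) M Q)) : Subsingleton (extGroup R (i + 1) K Q) := by
  let res := ProjectiveResolution.of K
  rw [(res.prepend h).subsingleton_extGroup_succ_iff] at hM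
  rw [res.subsingleton_extGroup_succ_iff]
  simp only [ProjectiveResolution.prepend, ProjectiveResolution.ofExact,
    ChainComplex.linearYonedaObj_d, ChainComplex.augment_d_succ_succ] at hM
  exact hM

end

theorem firstSyzygy_sgProjective_general {R : Type u} [Ring R] (n m : ℕ)
    (M K P : ModuleCat.{u} R) (hM : IsSGProjective R n m M) (hP : Projective P)
    (f : K ⟶ P) (g : P ⟶ M) (hf : Function.Injective f) (hg : Function.Surjective g)
    (hfg : Function.Exact f g) : IsSGProjective R n (m - 1) K := by
  have hses : IsShortExact f g := ⟨hf, hfg, hg⟩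
  refine ⟨HasSGSequence.syzygy hM.1 hses, fun i hi Q hQ => ?_⟩
  obtain ⟨j, rfl⟩ : ∃ j, i = j + 1 := ⟨i - 1, by omega⟩
  exact hses.subsingleton_extGroup j Q (hM.2 (j + 2) (by omega) Q hQ)

/-- if `M` is `(n,m)`-SG-projective (`m ≥ 1`) and `0 → K → P → M → 0` is exact with
`P` projective, then the first syzygy `K` is `(n, m-1)`-SG-projective. -/
theorem firstSyzygy_sgProjective {R : Type u} [Ring R] (n m : ℕ) (hn : 1 ≤ n) (hm : 1 ≤ m)
    (M K P : ModuleCat.{u} R) (hM : IsSGProjective R n m M) (hP : Projective P)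
    (f : K ⟶ P) (g : P ⟶ M) (hf : Function.Injective f) (hg : Function.Surjective g)
    (hfg : Function.Exact f g) : IsSGProjective R n (m - 1) K :=
  firstSyzygy_sgProjective_general n m M K P hM hP f g hf hg hfg
end
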